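/- In type A_3 with simple reflections r, s, t (Dynkin diagram r—s—t), the pairs (rts, e) and (srts, s) are equivalent under the relation generated by simultaneous left/right descent multiplication, yet the Bruhat intervals [e, rts] and [s, srts] are not isomorphic as posets. -/

import Mathlib

/-!
The pair `(srts, s)` reduces to `(rts, e)` by the common left descent `s`.

Below `rts` there are only products of subwords of the reduced word `rts`: this set of at most
eight elements is closed under the downward steps `w ↦ w t` (`t` a reflection with
`ℓ(w t) < ℓ(w)`) that generate the Bruhat order. On the other hand `s, sr, rs, st, ts, srt, srs,
sts, rts` are nine distinct elements of `[s, srts]`, each joined to `s` and to `srts` by deleting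
single letters from reduced words. So the two intervals do not even have the same size. Lengths
and distinctness are read off the permutation representation `W → S₄`, whose inversion count
bounds the Coxeter length from below.
-/

/-- The Bruhat order on a Coxeter group. -/
inductive BruhatLE {B W : Type*} [Group W] {M : CoxeterMatrix B} (cs : CoxeterSystem M W) :
    W → W → Prop
  | refl (x : W) : BruhatLE cs x x
  | step (x y t : W) : cs.IsReflection t → cs.length x < cs.length (x * t) →
      BruhatLE cs (x * t) y → BruhatLE cs x y

/-- One step of the equivalence relation on pairs: simultaneous right multiplication by a
common right descent, or simultaneous left multiplication by a common left descent. -/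
def PairStep {B W : Type*} [Group W] {M : CoxeterMatrix B} (cs : CoxeterSystem M W)
    (p q : W × W) : Prop :=
  (∃ i : B, cs.length (p.1 * cs.simple i) < cs.length p.1 ∧
    cs.length (p.2 * cs.simple i) < cs.length p.2 ∧
    q = (p.1 * cs.simple i, p.2 * cs.simple i)) ∨
  (∃ i : B, cs.length (cs.simple i * p.1) < cs.length p.1 ∧
    cs.length (cs.simple i * p.2) < cs.length p.2 ∧
    q = (cs.simple i * p.1, cs.simple i * p.2))

open CoxeterSystem Equiv List

namespace BruhatLE

variable {B W : Type*} [Group W] {M : CoxeterMatrix B} {cs : CoxeterSystem M W}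

theorem trans {x y z : W} (hxy : BruhatLE cs x y) (hyz : BruhatLE cs y z) : BruhatLE cs x z := by
  induction hxy with
  | refl => exact hyz
  | step x y t ht hlt _ ih => exact .step x z t ht hlt (ih hyz)

theorem of_mul_reflection {x t : W} (ht : cs.IsReflection t)
    (hlt : cs.length x < cs.length (x * t)) : BruhatLE cs x (x * t) :=
  .step x _ t ht hlt (.refl _)

theorem wordProd_eraseIdx {ω : List B} (hω : cs.IsReduced ω) {j : ℕ} (hj : j < ω.length) :
    BruhatLE cs (cs.wordProd (ω.eraseIdx j)) (cs.wordProd ω) := by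
  have hmem : (cs.rightInvSeq ω).getD j 1 ∈ cs.rightInvSeq ω := by
    rw [List.getD_eq_getElem _ _ (by simpa using hj)]
    exact List.getElem_mem _
  obtain ⟨ht, hlt⟩ := cs.isRightInversion_of_mem_rightInvSeq hω hmem
  have hle := of_mul_reflection (x := cs.wordProd ω * (cs.rightInvSeq ω).getD j 1) ht
    (by rwa [mul_assoc, ht.mul_self, mul_one])
  rwa [mul_assoc, ht.mul_self, mul_one, cs.wordProd_mul_getD_rightInvSeq] at hle

theorem mem_of_le {S : Set W}
    (hS : ∀ w ∈ S, ∀ t, cs.IsReflection t → cs.length (w * t) < cs.length w → w * t ∈ S)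
    {x y : W} (h : BruhatLE cs x y) (hy : y ∈ S) : x ∈ S := by
  induction h with
  | refl => exact hy
  | step x y t ht hlt _ ih =>
    have hxt : x * t * t = x := by rw [mul_assoc, ht.mul_self, mul_one]
    simpa only [hxt] using hS _ (ih hy) t ht (by rwa [hxt])

end BruhatLE

theorem pairStep_of_isLeftDescent {B W : Type*} [Group W] {M : CoxeterMatrix B}
    {cs : CoxeterSystem M W} {x y : W} {i : B} (hx : cs.IsLeftDescent x i)
    (hy : cs.IsLeftDescent y i) : PairStep cs (x, y) (cs.simple i * x, cs.simple i * y) :=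
  .inr ⟨i, hx, hy, rfl⟩

theorem CoxeterSystem.simple_mul_simple_comm_of_eq_two {B W : Type*} [Group W]
    {M : CoxeterMatrix B} (cs : CoxeterSystem M W) {i j : B} (h : M i j = 2) :
    cs.simple i * cs.simple j = cs.simple j * cs.simple i := by
  simpa [braidWord, h, M.symmetric j i, alternatingWord, wordProd_cons] using
    cs.wordProd_braidWord_eq i j

theorem CoxeterSystem.le_length_of_monoidHom {B W G : Type*} [Group W] [Monoid G]
    {M : CoxeterMatrix B} (cs : CoxeterSystem M W) (f : W →* G) {N : G → ℕ} (hN : N 1 = 0)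
    (hNs : ∀ i g, N (f (cs.simple i) * g) ≤ N g + 1) (w : W) : N (f w) ≤ cs.length w := by
  suffices h : ∀ ω, N (f (cs.wordProd ω)) ≤ ω.length by
    obtain ⟨ω, hω, rfl⟩ := cs.exists_isReduced w
    exact hω.eq ▸ h ω
  intro ω
  induction ω with
  | nil => simp [hN]
  | cons i ω ih =>
    rw [cs.wordProd_cons, map_mul, List.length_cons]
    exact (hNs i _).trans (Nat.add_le_add_right ih 1)

namespace Equiv.Perm

def adjSwap {n : ℕ} (i : Fin n) : Perm (Fin (n + 1)) := swap i.castSucc i.succ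

def inversionCount {n : ℕ} (σ : Perm (Fin n)) : ℕ :=
  Finset.card {p : Fin n × Fin n | p.1 < p.2 ∧ σ p.2 < σ p.1}

theorem inversionCount_one {n : ℕ} : inversionCount (1 : Perm (Fin n)) = 0 := by
  simp only [inversionCount, Perm.one_apply, Finset.card_eq_zero]
  exact Finset.filter_false_of_mem fun _ _ h => lt_asymm h.1 h.2

theorem inversionCount_adjSwap_mul_le (i : Fin 3) (σ : Perm (Fin 4)) :
    inversionCount (adjSwap i * σ) ≤ inversionCount σ + 1 := by
  revert i σ; decide

end Equiv.Perm

theorem Finset.card_le_card_of_subtype_equiv {α β : Type*} {p : α → Prop} {q : β → Prop}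
    (e : {a // p a} ≃ {b // q b}) {s : Finset α} {t : Finset β} (hs : ∀ a ∈ s, p a)
    (ht : ∀ b, q b → b ∈ t) : s.card ≤ t.card := by
  let g : s → t := fun a => ⟨(e ⟨a, hs a a.2⟩).1, ht _ (e _).2⟩
  have hg : Function.Injective g := fun a a' h => by
    have h' : e ⟨a, hs a a.2⟩ = e ⟨a', hs a' a'.2⟩ :=
      Subtype.ext (congrArg (fun b : t => (b : β)) h)
    exact Subtype.ext (Subtype.mk.inj (e.injective h'))
  simpa using Fintype.card_le_of_injective g hg

namespace TypeA3

open Perm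

variable {W : Type*} [Group W] {M : CoxeterMatrix (Fin 3)} (cs : CoxeterSystem M W)

local prefix:100 "π" => cs.wordProd
local prefix:100 "ℓ" => cs.length

theorem isLiftable_adjSwap (hM01 : M 0 1 = 3) (hM12 : M 1 2 = 3) (hM02 : M 0 2 = 2) :
    M.IsLiftable (adjSwap : Fin 3 → Perm (Fin 4)) := by
  intro i j
  fin_cases i <;> fin_cases j <;>
    simp [hM01, hM12, hM02, M.symmetric 1 0, M.symmetric 2 1, M.symmetric 2 0] <;>
    decide

variable {cs} {f : W →* Perm (Fin 4)}

theorem map_wordProd_eq_prod_adjSwap (hf : ∀ i, f (cs.simple i) = adjSwap i) (ω : List (Fin 3)) :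
    f (π ω) = (ω.map adjSwap).prod := by
  simp [wordProd, map_list_prod, Function.comp_def, hf]

theorem isReduced_of_le_inversionCount (hf : ∀ i, f (cs.simple i) = adjSwap i) {ω : List (Fin 3)}
    (h : ω.length ≤ inversionCount (ω.map adjSwap).prod) : cs.IsReduced ω := by
  refine le_antisymm (cs.length_wordProd_le ω) (h.trans ?_)
  rw [← map_wordProd_eq_prod_adjSwap hf]
  exact cs.le_length_of_monoidHom f inversionCount_one
    (fun i σ => hf i ▸ inversionCount_adjSwap_mul_le i σ) _

theorem exists_sublist_eq_mul_of_length_mul_lt (hf : ∀ i, f (cs.simple i) = adjSwap i)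
    (hM02 : M 0 2 = 2) {ω : List (Fin 3)} (hω : ω <+ [0, 2, 1]) {t : W}
    (ht : cs.IsReflection t) (hlt : ℓ (π ω * t) < ℓ (π ω)) :
    ∃ ν, ν <+ [0, 2, 1] ∧ π ν = π ω * t := by
  obtain ⟨ν, hν, hνeq⟩ := cs.exists_isReduced (π ω * t)
  have hlen : ν.length < ω.length := by
    rw [← hν.eq, ← hνeq]; exact hlt.trans_le (cs.length_wordProd_le ω)
  have h3 : ω.length ≤ 3 := hω.length_le
  match ν, hlen, hνeq with
  | [], _, hνeq => exact ⟨[], List.nil_sublist _, hνeq.symm⟩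
  | [a], _, hνeq => exact ⟨[a], by fin_cases a <;> decide, hνeq.symm⟩
  | [a, b], hlen, hνeq =>
    obtain rfl : ω = [0, 2, 1] := hω.eq_of_length (by simp at hlen ⊢; omega)
    -- `t = (rts)⁻¹ * u` is an involution, which in `S₄` forces the length-two element `u` to
    -- be a subword of `rts`, up to cancellation or commutation
    have key : ∀ a b : Fin 3,
        ((([0, 2, 1] : List (Fin 3)).map adjSwap).prod⁻¹ * ([a, b].map adjSwap).prod) ^ 2 = 1 →
          [a, b] <+ [0, 2, 1] ∨ a = b ∨ (a = 2 ∧ b = 0) := by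
      decide
    have hinv := congrArg f ht.pow_two
    rw [eq_inv_mul_of_mul_eq hνeq, map_pow, map_one, map_mul, map_inv,
      map_wordProd_eq_prod_adjSwap hf, map_wordProd_eq_prod_adjSwap hf] at hinv
    rcases key a b hinv with h | rfl | ⟨rfl, rfl⟩
    · exact ⟨[a, b], h, hνeq.symm⟩
    · exact ⟨[], List.nil_sublist _, by rw [hνeq]; simp [wordProd_cons]⟩
    · refine ⟨[0, 2], by decide, ?_⟩
      rw [hνeq]
      simpa [wordProd_cons] using cs.simple_mul_simple_comm_of_eq_two hM02
  | _ :: _ :: _ :: _, hlen, _ => simp at hlen; omega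

theorem exists_card_le_eight_of_bruhatLE_rts (hf : ∀ i, f (cs.simple i) = adjSwap i)
    (hM02 : M 0 2 = 2) :
    ∃ S : Finset W, S.card ≤ 8 ∧ ∀ x, BruhatLE cs x (π [0, 2, 1]) → x ∈ S := by
  classical
  refine ⟨(([0, 2, 1] : List (Fin 3)).sublists.map cs.wordProd).toFinset,
    (toFinset_card_le _).trans (by simp), fun x hx => ?_⟩
  obtain ⟨ν, hν, rfl⟩ := BruhatLE.mem_of_le (S := {w | ∃ ν, ν <+ [0, 2, 1] ∧ π ν = w})
    (by
      rintro _ ⟨ω, hω, rfl⟩ t ht hlt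
      exact exists_sublist_eq_mul_of_length_mul_lt hf hM02 hω ht hlt)
    hx ⟨_, .refl _, rfl⟩
  simpa using ⟨ν, hν, rfl⟩

theorem exists_nine_le_card_of_mem_Icc_s_srts (hf : ∀ i, f (cs.simple i) = adjSwap i) :
    ∃ T : Finset W, 9 ≤ T.card ∧
      ∀ z ∈ T, BruhatLE cs (cs.simple 1) z ∧ BruhatLE cs z (π [1, 0, 2, 1]) := by
  classical
  have erase (ω : List (Fin 3)) (j : ℕ)
      (h : j < ω.length ∧ ω.length ≤ inversionCount (ω.map adjSwap).prod) :
      BruhatLE cs (π (ω.eraseIdx j)) (π ω) :=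
    BruhatLE.wordProd_eraseIdx (isReduced_of_le_inversionCount hf h.2) h.1
  let L : List (List (Fin 3)) :=
    [[1], [1, 0], [0, 1], [1, 2], [2, 1], [1, 0, 2], [1, 0, 1], [1, 2, 1], [0, 2, 1]]
  have hnodup : (L.map cs.wordProd).Nodup := by
    refine Nodup.of_map f ?_
    simp only [List.map_map, Function.comp_def, map_wordProd_eq_prod_adjSwap hf]
    decide
  refine ⟨(L.map cs.wordProd).toFinset, by rw [toFinset_card_of_nodup hnodup]; rfl, ?_⟩
  have h1_10 : BruhatLE cs (π [1]) (π [1, 0]) := erase [1, 0] 1 (by decide)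
  have h1_01 : BruhatLE cs (π [1]) (π [0, 1]) := erase [0, 1] 0 (by decide)
  have h1_12 : BruhatLE cs (π [1]) (π [1, 2]) := erase [1, 2] 1 (by decide)
  have h1_21 : BruhatLE cs (π [1]) (π [2, 1]) := erase [2, 1] 0 (by decide)
  have h10_102 : BruhatLE cs (π [1, 0]) (π [1, 0, 2]) := erase [1, 0, 2] 2 (by decide)
  have h10_101 : BruhatLE cs (π [1, 0]) (π [1, 0, 1]) := erase [1, 0, 1] 2 (by decide)
  have h12_121 : BruhatLE cs (π [1, 2]) (π [1, 2, 1]) := erase [1, 2, 1] 2 (by decide)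
  have h01_021 : BruhatLE cs (π [0, 1]) (π [0, 2, 1]) := erase [0, 2, 1] 1 (by decide)
  have h21_021 : BruhatLE cs (π [2, 1]) (π [0, 2, 1]) := erase [0, 2, 1] 0 (by decide)
  have h102_top : BruhatLE cs (π [1, 0, 2]) (π [1, 0, 2, 1]) := erase [1, 0, 2, 1] 3 (by decide)
  have h101_top : BruhatLE cs (π [1, 0, 1]) (π [1, 0, 2, 1]) := erase [1, 0, 2, 1] 2 (by decide)
  have h121_top : BruhatLE cs (π [1, 2, 1]) (π [1, 0, 2, 1]) := erase [1, 0, 2, 1] 1 (by decide)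
  have h021_top : BruhatLE cs (π [0, 2, 1]) (π [1, 0, 2, 1]) := erase [1, 0, 2, 1] 0 (by decide)
  intro z hz
  obtain ⟨ω, hω, rfl⟩ := List.mem_map.mp (List.mem_toFinset.mp hz)
  rw [← cs.wordProd_singleton 1]
  simp only [L, List.mem_cons, List.not_mem_nil, or_false] at hω
  rcases hω with rfl | rfl | rfl | rfl | rfl | rfl | rfl | rfl | rfl
  exacts [⟨.refl _, h1_10.trans (h10_102.trans h102_top)⟩, ⟨h1_10, h10_102.trans h102_top⟩,
    ⟨h1_01, h01_021.trans h021_top⟩, ⟨h1_12, h12_121.trans h121_top⟩,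
    ⟨h1_21, h21_021.trans h021_top⟩, ⟨h1_10.trans h10_102, h102_top⟩,
    ⟨h1_10.trans h10_101, h101_top⟩, ⟨h1_12.trans h12_121, h121_top⟩,
    ⟨h1_01.trans h01_021, h021_top⟩]

theorem eqvGen_pairStep_rts_srts (hf : ∀ i, f (cs.simple i) = adjSwap i) :
    Relation.EqvGen (PairStep cs) (π [0, 2, 1], 1) (π [1, 0, 2, 1], cs.simple 1) := by
  have hdesc : cs.IsLeftDescent (π [1, 0, 2, 1]) 1 := by
    rw [IsLeftDescent, (isReduced_of_le_inversionCount hf (by decide)).eq, wordProd_cons,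
      cs.simple_mul_simple_cancel_left]
    exact (cs.length_wordProd_le _).trans_lt (by simp)
  have hdesc_simple : cs.IsLeftDescent (cs.simple 1) 1 := by simp [IsLeftDescent]
  have hstep := pairStep_of_isLeftDescent hdesc hdesc_simple
  rw [wordProd_cons, cs.simple_mul_simple_cancel_left, cs.simple_mul_simple_self] at hstep
  exact .symm _ _ (.rel _ _ hstep)

end TypeA3

/-- In type `A₃` with simple reflections `r = s₀, s = s₁, t = s₂` (Dynkin diagram
`r — s — t`), the pairs `(rts, e)` and `(srts, s)` are equivalent under the relation
generated by simultaneous left/right descent multiplication, yet the Bruhat intervals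
`[e, rts]` and `[s, srts]` are not isomorphic as posets. -/
theorem equivalent_pairs_with_nonisomorphic_Bruhat_intervals
    {W : Type*} [Group W] {M : CoxeterMatrix (Fin 3)}
    (hM01 : M 0 1 = 3) (hM12 : M 1 2 = 3) (hM02 : M 0 2 = 2)
    (cs : CoxeterSystem M W) :
    Relation.EqvGen (PairStep cs)
      (cs.simple 0 * cs.simple 2 * cs.simple 1, 1)
      (cs.simple 1 * cs.simple 0 * cs.simple 2 * cs.simple 1, cs.simple 1) ∧
    ¬ ∃ e : {z : W // BruhatLE cs 1 z ∧ BruhatLE cs z (cs.simple 0 * cs.simple 2 * cs.simple 1)} ≃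
        {z : W // BruhatLE cs (cs.simple 1) z ∧
          BruhatLE cs z (cs.simple 1 * cs.simple 0 * cs.simple 2 * cs.simple 1)},
      ∀ a b, BruhatLE cs a.1 b.1 ↔ BruhatLE cs (e a).1 (e b).1 := by
  obtain ⟨f, hf⟩ : ∃ f : W →* Perm (Fin 4), ∀ i, f (cs.simple i) = Perm.adjSwap i :=
    ⟨_, cs.lift_apply_simple (TypeA3.isLiftable_adjSwap hM01 hM12 hM02)⟩
  have hrts : cs.simple 0 * cs.simple 2 * cs.simple 1 = cs.wordProd [0, 2, 1] := by
    simp [wordProd, mul_assoc]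
  have hsrts :
      cs.simple 1 * cs.simple 0 * cs.simple 2 * cs.simple 1 = cs.wordProd [1, 0, 2, 1] := by
    simp [wordProd, mul_assoc]
  rw [hrts, hsrts]
  refine ⟨TypeA3.eqvGen_pairStep_rts_srts hf, ?_⟩
  rintro ⟨e, -⟩
  obtain ⟨S, hS, hle_rts⟩ := TypeA3.exists_card_le_eight_of_bruhatLE_rts hf hM02
  obtain ⟨T, hT, hmem_Icc⟩ := TypeA3.exists_nine_le_card_of_mem_Icc_s_srts hf
  have := Finset.card_le_card_of_subtype_equiv e.symm hmem_Icc fun z hz => hle_rts z hz.2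
  omega
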